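/- arXiv:2509.18203 — 2 statements merged into one kernel-verified Lean document; each statement's English description precedes it below -/
import Mathlib

section
/- In the d-dimensional lattice graph with the slicing sets L_t, L_t^S, J_t^S as defined, for d ≤ t ≤ dn the following are equivalent: (i) the mixed boundary value problem Δ_γ u = 0 on L_{t−1}^S, u = 0 on J_{t−1}^S, D_γ u = 0 on J_{t−1}^S has only the zero solution on L_t^S; (ii) the family of vectors {v_p restricted to L_{t−1}^S ∪ J_{t−1}^S : p ∈ L_t^S} is linearly independent, where v_p is the row of the graph Laplacian at p; (iii) the linear map T₂'^{(t)} from potentials on L_t to induced currents on J_{t−1}^S (via the γ-harmonic extension that vanishes on J_{t−1}^S) is injective. -/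
/-!
Since `γ` is symmetric, `∑_p u_p v_p = Δ_γ u`: a linear relation among the rows `v_p` restricted
to `S = L_{t-1}^S ∪ J_{t-1}^S` is exactly a function `u` supported on `L_t^S` with `Δ_γ u = 0` on
`S`. At a boundary point the current `D_γ u` equals `Δ_γ u`, so the mixed problem is the same
condition, and values of `u` on `J_t^S \ J_{t-1}^S` are never seen. If such a `u` also vanishes
on the top slice `L_t`, it is supported in `L_{t-1}^S` and harmonic there, hence zero by the
maximum principle; so uniqueness only has to be checked on `L_t`, which is the injectivity of
`T₂'^{(t)}`.
-/

noncomputable section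
open Classical Finset

namespace DiscreteCalderon

/-- Vertices of the ambient lattice `ℤ^d`. -/
abbrev V (d : ℕ) := Fin d → ℤ

/-- Interior vertex set `D = {x : 1 ≤ x_i ≤ n}`. -/
def Dset (d n : ℕ) : Set (V d) := {x | ∀ i, 1 ≤ x i ∧ x i ≤ (n : ℤ)}

/-- ℓ¹ distance. -/
def dist1 {d : ℕ} (p q : V d) : ℤ := ∑ i, |p i - q i|

/-- Boundary vertex set `∂D`: vertices at ℓ¹ distance 1 from `D`. -/
def Bset (d n : ℕ) : Set (V d) := {p | p ∉ Dset d n ∧ ∃ q ∈ Dset d n, dist1 p q = 1}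

/-- All vertices of the graph, `D ∪ ∂D`. -/
def Vset (d n : ℕ) : Set (V d) := Dset d n ∪ Bset d n

/-- Adjacency of the lattice graph: ℓ¹ distance 1, both endpoints vertices,
not both on the boundary. -/
def Adj (d n : ℕ) (p q : V d) : Prop :=
  dist1 p q = 1 ∧ p ∈ Vset d n ∧ q ∈ Vset d n ∧ (p ∈ Dset d n ∨ q ∈ Dset d n)

/-- A finite box containing all vertices. -/
def box (d n : ℕ) : Finset (V d) :=
  Fintype.piFinset (fun _ : Fin d => Finset.Icc (0 : ℤ) ((n : ℤ) + 1))

/-- Neighbours of `p` in the graph, as a finite set. -/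
def nbr (d n : ℕ) (p : V d) : Finset (V d) := (box d n).filter (fun q => Adj d n p q)

/-- Interior neighbours of `p`. -/
def nbrD (d n : ℕ) (p : V d) : Finset (V d) := (nbr d n p).filter (fun q => q ∈ Dset d n)

/-- The discrete (weighted) Laplacian `(Δ_γ u)_p = ∑_{q∈N(p)} γ_{qp}(u_q - u_p)`. -/
def lap (d n : ℕ) (γ : V d → V d → ℝ) (u : V d → ℝ) (p : V d) : ℝ :=
  ∑ q ∈ nbr d n p, γ q p * (u q - u p)

/-- The boundary current `(D_γ u)_p = ∑_{q∈N(p)∩D} γ_{pq}(u_q - u_p)`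
(there is exactly one interior neighbour of a boundary node). -/
def cur (d n : ℕ) (γ : V d → V d → ℝ) (u : V d → ℝ) (p : V d) : ℝ :=
  ∑ q ∈ nbrD d n p, γ p q * (u q - u p)

/-- A strictly positive symmetric conductivity. -/
def GoodCond (d n : ℕ) (γ : V d → V d → ℝ) : Prop :=
  (∀ p q, γ p q = γ q p) ∧ ∀ p q, Adj d n p q → 0 < γ p q

/-- The coordinate sum of a lattice point. -/
def sum1 {d : ℕ} (x : V d) : ℤ := ∑ i, x i

/-- Interior diagonal slice `L_t`. -/
def L (d n : ℕ) (t : ℤ) : Set (V d) := {x | x ∈ Dset d n ∧ sum1 x = t}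

/-- `L_t^S = ∪_{ℓ ≤ t} L_ℓ`. -/
def LS (d n : ℕ) (t : ℤ) : Set (V d) := {x | x ∈ Dset d n ∧ sum1 x ≤ t}

/-- Boundary diagonal slice `K_t`. -/
def K (d n : ℕ) (t : ℤ) : Set (V d) := {x | x ∈ Bset d n ∧ sum1 x = t}

/-- `K_t^- = {x ∈ K_t : min_i x_i = 0}`. -/
def Km (d n : ℕ) (t : ℤ) : Set (V d) := {x | x ∈ K d n t ∧ ∃ i, x i = 0}

/-- `K_t^+ = {x ∈ K_t : max_i x_i = n+1}`. -/
def Kp (d n : ℕ) (t : ℤ) : Set (V d) := {x | x ∈ K d n t ∧ ∃ i, x i = (n : ℤ) + 1}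

/-- `K_t^{S-} = ∪_{ℓ ≤ t} K_ℓ^-`. -/
def KSm (d n : ℕ) (t : ℤ) : Set (V d) := {x | x ∈ Bset d n ∧ sum1 x ≤ t ∧ ∃ i, x i = 0}

/-- `K_t^{S+} = ∪_{ℓ ≤ t} K_ℓ^+`. -/
def KSp (d n : ℕ) (t : ℤ) : Set (V d) := {x | x ∈ Bset d n ∧ sum1 x ≤ t ∧ ∃ i, x i = (n : ℤ) + 1}

/-- The lower boundary region `J_t^S = K_t^{S-} ∪ K_{t+1}^{S+}`. -/
def JS (d n : ℕ) (t : ℤ) : Set (V d) := KSm d n t ∪ KSp d n (t + 1)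

/-- `J_t = K_t^- ∪ K_{t+1}^+`. -/
def Jslice (d n : ℕ) (t : ℤ) : Set (V d) := Km d n t ∪ Kp d n (t + 1)

/-- `u` is the γ-harmonic extension of boundary data `φ` (zero-extension convention
outside `D ∪ ∂D`). -/
def IsSol (d n : ℕ) (γ : V d → V d → ℝ) (φ u : V d → ℝ) : Prop :=
  (∀ p, p ∉ Vset d n → u p = 0) ∧
  (∀ p ∈ Dset d n, lap d n γ u p = 0) ∧
  (∀ p ∈ Bset d n, u p = φ p)

/-- The Laplacian row vector `v_p`. -/
def vrow (d n : ℕ) (γ : V d → V d → ℝ) (p : V d) : V d → ℝ := fun q =>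
  if Adj d n p q then γ p q
  else if q = p then -(∑ r ∈ nbr d n p, γ p r) else 0

/-- Restriction of a function to a set (zero outside). -/
def rst {d : ℕ} (S : Set (V d)) (f : V d → ℝ) : V d → ℝ := fun q => if q ∈ S then f q else 0

/-- Euclidean inner product of (vertex-supported) functions. -/
def dot (d n : ℕ) (f g : V d → ℝ) : ℝ := ∑ p ∈ box d n, f p * g p

/-- The localized solution space `𝒰^{(t)}`: restrictions to `L_t^S ∪ J_t^S` of
harmonic extensions of boundary potentials in `ker T₁^{(t)}`. -/
def Uset (d n : ℕ) (γ : V d → V d → ℝ) (t : ℤ) : Set (V d → ℝ) :=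
  {u | (∀ p, p ∉ LS d n t ∪ JS d n t → u p = 0) ∧
    ∃ φ w : V d → ℝ, (∀ p, p ∉ JS d n t → φ p = 0) ∧ IsSol d n γ φ w ∧
      (∀ p ∈ L d n (t + 1), w p = 0) ∧ ∀ p ∈ LS d n t ∪ JS d n t, u p = w p}

/-- The set `E_t` of edges between the consecutive layers:
`E(K_t^-, L_{t+1}) ∪ E(L_t, K_{t+1}^+) ∪ E(L_t, L_{t+1})`. -/
def EdgeT (d n : ℕ) (t : ℤ) (p q : V d) : Prop :=
  Adj d n p q ∧
    ((p ∈ Km d n t ∧ q ∈ L d n (t + 1)) ∨ (q ∈ Km d n t ∧ p ∈ L d n (t + 1)) ∨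
     (p ∈ L d n t ∧ q ∈ Kp d n (t + 1)) ∨ (q ∈ L d n t ∧ p ∈ Kp d n (t + 1)) ∨
     (p ∈ L d n t ∧ q ∈ L d n (t + 1)) ∨ (q ∈ L d n t ∧ p ∈ L d n (t + 1)))

/-- The edge vector `J_p^u ∈ ℝ^{E_t}`, `J_p^u(pq) = u_p - u_q` on edges of `E_t`
incident to `p`, and `0` otherwise (as a symmetric function of edge endpoints). -/
def Jvec (d n : ℕ) (t : ℤ) (u : V d → ℝ) (p : V d) : V d → V d → ℝ := fun a b =>
  if EdgeT d n t a b then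
    (if a = p then u a - u b else if b = p then u b - u a else 0)
  else 0

/-- Inner product of edge functions. -/
def dotE (d n : ℕ) (f g : V d → V d → ℝ) : ℝ :=
  ∑ p ∈ box d n, ∑ q ∈ box d n, f p q * g p q

section Geometry

variable {d n : ℕ}

lemma dist1_comm (p q : V d) : dist1 p q = dist1 q p := by
  simp [dist1, abs_sub_comm]

lemma Adj.symm {p q : V d} (h : Adj d n p q) : Adj d n q p :=
  ⟨(dist1_comm q p).trans h.1, h.2.2.1, h.2.1, h.2.2.2.symm⟩

lemma Adj.ne {p q : V d} (h : Adj d n p q) : p ≠ q := by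
  rintro rfl
  simpa [dist1] using h.1

lemma exists_step_of_dist1_eq_one {p q : V d} (h : dist1 p q = 1) :
    ∃ j, (p j = q j + 1 ∨ p j = q j - 1) ∧ ∀ i, i ≠ j → p i = q i := by
  obtain ⟨j, hj⟩ : ∃ j, p j ≠ q j := by
    by_contra! he
    simp [dist1, he] at h
  have hsplit := Finset.add_sum_erase Finset.univ (fun i => |p i - q i|) (Finset.mem_univ j)
  have hrest : 0 ≤ ∑ i ∈ Finset.univ.erase j, |p i - q i| :=
    Finset.sum_nonneg fun i _ => abs_nonneg _
  have hj1 : 0 < |p j - q j| := abs_pos.mpr (sub_ne_zero.mpr hj)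
  have hzero : ∑ i ∈ Finset.univ.erase j, |p i - q i| = 0 := by
    rw [dist1] at h; omega
  refine ⟨j, ?_, fun i hi => ?_⟩
  · have : |p j - q j| = 1 := by rw [dist1] at h; omega
    rcases abs_eq (zero_le_one' ℤ) |>.mp this with h' | h' <;> omega
  · have := (Finset.sum_eq_zero_iff_of_nonneg fun i _ => abs_nonneg (p i - q i)).mp hzero i
      (Finset.mem_erase.mpr ⟨hi, Finset.mem_univ i⟩)
    rw [abs_eq_zero] at this; omega

lemma sum1_eq_add_sub_of_step {p q : V d} {j : Fin d} (hj : ∀ i, i ≠ j → p i = q i) :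
    sum1 p = sum1 q + (p j - q j) := by
  have : sum1 p - sum1 q = p j - q j := by
    rw [sum1, sum1, ← Finset.sum_sub_distrib]
    exact Finset.sum_eq_single j (fun i _ hi => by rw [hj i hi, sub_self]) (by simp)
  omega

lemma Dset_subset_box : Dset d n ⊆ ↑(box d n) := by
  intro p hp
  simp only [box, Finset.mem_coe, Fintype.mem_piFinset, Finset.mem_Icc]
  intro i
  have := hp i
  omega

lemma Bset_subset_box : Bset d n ⊆ ↑(box d n) := by
  rintro p ⟨-, q, hq, hpq⟩
  obtain ⟨j, hj, hrest⟩ := exists_step_of_dist1_eq_one hpq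
  simp only [box, Finset.mem_coe, Fintype.mem_piFinset, Finset.mem_Icc]
  intro i
  have := hq i
  by_cases hij : i = j
  · subst hij; omega
  · rw [hrest i hij]; omega

lemma Vset_subset_box : Vset d n ⊆ ↑(box d n) :=
  Set.union_subset Dset_subset_box Bset_subset_box

lemma notMem_Bset_of_mem_Dset {p : V d} (hp : p ∈ Dset d n) : p ∉ Bset d n :=
  fun h => h.1 hp

lemma mem_nbr {p q : V d} : q ∈ nbr d n p ↔ Adj d n p q :=
  ⟨fun h => (Finset.mem_filter.mp h).2,
    fun h => Finset.mem_filter.mpr ⟨Vset_subset_box h.2.2.1, h⟩⟩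

lemma mem_Dset_of_adj_of_mem_Bset {p q : V d} (hq : q ∈ Bset d n) (h : Adj d n q p) :
    p ∈ Dset d n :=
  h.2.2.2.resolve_left (notMem_Bset_of_mem_Dset · hq)

lemma adj_add_single {p : V d} (hp : p ∈ Dset d n) (i : Fin d) :
    Adj d n p (p + Pi.single i 1) := by
  have hdist : dist1 p (p + Pi.single i 1) = 1 := by
    simp [dist1, Pi.single_apply, apply_ite]
  refine ⟨hdist, Or.inl hp, ?_, Or.inl hp⟩
  by_cases hD : p + Pi.single i 1 ∈ Dset d n
  · exact Or.inl hD
  · exact Or.inr ⟨hD, p, hp, (dist1_comm _ _).trans hdist⟩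

variable {t : ℤ}

lemma LS_subset_Dset : LS d n t ⊆ Dset d n := fun _ h => h.1

lemma L_subset_LS : L d n t ⊆ LS d n t := fun _ h => ⟨h.1, h.2.le⟩

lemma JS_subset_Bset : JS d n t ⊆ Bset d n := by
  rintro p (h | h) <;> exact h.1

lemma notMem_LS_of_mem_Bset {p : V d} (hp : p ∈ Bset d n) : p ∉ LS d n t :=
  fun h => notMem_Bset_of_mem_Dset h.1 hp

lemma mem_LS_or_JS_of_adj {q p : V d} (hq : q ∈ LS d n (t - 1)) (h : Adj d n q p) :
    p ∈ LS d n t ∪ JS d n (t - 1) := by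
  obtain ⟨j, hj, hrest⟩ := exists_step_of_dist1_eq_one ((dist1_comm p q).trans h.1)
  have hsum := sum1_eq_add_sub_of_step hrest
  have hqt := hq.2
  rcases h.2.2.1 with hpD | hpB
  · exact Or.inl ⟨hpD, by omega⟩
  · right
    have hbad : ¬(1 ≤ p j ∧ p j ≤ (n : ℤ)) := fun hpj =>
      hpB.1 fun i => if hij : i = j then hij ▸ hpj else hrest i hij ▸ hq.1 i
    have hqj := hq.1 j
    rcases hj with hj | hj
    · exact Or.inr ⟨hpB, by omega, j, by omega⟩
    · exact Or.inl ⟨hpB, by omega, j, by omega⟩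

end Geometry

section Laplacian

variable {d n : ℕ} {γ : V d → V d → ℝ}

lemma lap_neg (u : V d → ℝ) (p : V d) : lap d n γ (-u) p = -lap d n γ u p := by
  simp only [lap, Pi.neg_apply, ← Finset.sum_neg_distrib]
  exact Finset.sum_congr rfl fun q _ => by ring

lemma lap_congr {u v : V d → ℝ} {p : V d} (hp : u p = v p)
    (hnbr : ∀ q, Adj d n p q → u q = v q) : lap d n γ u p = lap d n γ v p :=
  Finset.sum_congr rfl fun q hq => by rw [hp, hnbr q (mem_nbr.mp hq)]

lemma cur_eq_lap_of_mem_Bset (hsymm : ∀ p q, γ p q = γ q p) (u : V d → ℝ) {p : V d}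
    (hp : p ∈ Bset d n) : cur d n γ u p = lap d n γ u p := by
  have hnbr : nbrD d n p = nbr d n p :=
    Finset.filter_true_of_mem fun q hq => mem_Dset_of_adj_of_mem_Bset hp (mem_nbr.mp hq)
  rw [cur, lap, hnbr]
  exact Finset.sum_congr rfl fun q _ => by rw [hsymm]

lemma sum_mul_vrow_eq_lap (hsymm : ∀ p q, γ p q = γ q p) (u : V d → ℝ) {q : V d}
    (hq : q ∈ box d n) : ∑ p ∈ box d n, u p * vrow d n γ p q = lap d n γ u q := by
  have hrow : ∀ p, u p * vrow d n γ p q =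
      (if Adj d n q p then u p * γ q p else 0) +
        (if q = p then -(u p * ∑ r ∈ nbr d n p, γ p r) else 0) := by
    intro p
    by_cases hA : Adj d n p q
    · simp [vrow, hA, hA.symm, hA.ne.symm, hsymm p q]
    · have hA' : ¬Adj d n q p := fun h => hA h.symm
      by_cases hpq : q = p
      · subst hpq
        simp [vrow, hA]
      · simp [vrow, hA, hA', hpq]
  rw [Finset.sum_congr rfl fun p _ => hrow p, Finset.sum_add_distrib, ← Finset.sum_filter,
    Finset.sum_ite_eq _ _ _ , if_pos hq, lap, ← nbr]
  simp only [mul_sub, Finset.sum_sub_distrib, Finset.mul_sum, hsymm q, mul_comm]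
  ring

end Laplacian

section Independence

variable {d n : ℕ} {γ : V d → V d → ℝ}

lemma rst_eq_zero_iff {S : Set (V d)} {f : V d → ℝ} : rst S f = 0 ↔ ∀ q ∈ S, f q = 0 := by
  simp only [funext_iff, rst, Pi.zero_apply, ite_eq_right_iff]

lemma sum_smul_rst_vrow (hsymm : ∀ p q, γ p q = γ q p) {F : Finset (V d)} (hF : F ⊆ box d n)
    {S : Set (V d)} (hS : S ⊆ box d n) {u : V d → ℝ} (hu : ∀ p ∉ F, u p = 0) :
    ∑ p ∈ F, u p • rst S (vrow d n γ p) = rst S (lap d n γ u) := by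
  funext q
  simp only [Finset.sum_apply, Pi.smul_apply, smul_eq_mul, rst, mul_ite, mul_zero,
    Finset.sum_ite_irrel, Finset.sum_const_zero]
  split_ifs with hq
  · rw [← sum_mul_vrow_eq_lap hsymm u (hS hq)]
    exact Finset.sum_subset hF fun p _ hp => by rw [hu p hp, zero_mul]
  · rfl

theorem linearIndepOn_rst_vrow_iff (hsymm : ∀ p q, γ p q = γ q p) {T S : Set (V d)}
    (hT : T ⊆ box d n) (hS : S ⊆ box d n) :
    LinearIndepOn ℝ (fun p => rst S (vrow d n γ p)) T ↔
      ∀ u : V d → ℝ, (∀ p ∉ T, u p = 0) → (∀ q ∈ S, lap d n γ u q = 0) → ∀ p ∈ T, u p = 0 := by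
  obtain ⟨F, rfl⟩ := ((box d n).finite_toSet.subset hT).exists_finset_coe
  rw [Finset.coe_subset] at hT
  rw [linearIndepOn_finset_iff]
  constructor
  · intro h u hu hlap
    exact h u (by rw [sum_smul_rst_vrow hsymm hT hS hu, rst_eq_zero_iff]; exact hlap)
  · intro h f hf
    set u := (F : Set (V d)).indicator f
    have hu : ∀ p ∉ F, u p = 0 := fun p hp => Set.indicator_of_notMem hp f
    have hfu : ∀ p ∈ F, f p = u p := fun p hp => (Set.indicator_of_mem hp f).symm
    rw [Finset.sum_congr rfl fun p hp => by rw [hfu p hp], sum_smul_rst_vrow hsymm hT hS hu,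
      rst_eq_zero_iff] at hf
    intro p hp
    rw [hfu p hp]
    exact h u hu hf p hp

end Independence

section MaximumPrinciple

variable {d n : ℕ} {γ : V d → V d → ℝ}

lemma eq_of_lap_eq_zero_of_forall_le (hpos : ∀ p q, Adj d n p q → 0 < γ p q) {u : V d → ℝ}
    {p : V d} (hlap : lap d n γ u p = 0) (hmax : ∀ q, Adj d n p q → u q ≤ u p) {q : V d}
    (hq : Adj d n p q) : u q = u p := by
  have hterm : ∀ r ∈ nbr d n p, γ r p * (u r - u p) ≤ 0 := fun r hr =>
    have hr := mem_nbr.mp hr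
    mul_nonpos_of_nonneg_of_nonpos (hpos r p hr.symm).le (sub_nonpos.mpr (hmax r hr))
  have := (Finset.sum_eq_zero_iff_of_nonpos hterm).mp hlap q (mem_nbr.mpr hq)
  rcases mul_eq_zero.mp this with h | h
  · exact absurd h (hpos q p hq.symm).ne'
  · exact sub_eq_zero.mp h

/-- Maximum principle: a positive maximum of `u` would be attained at an interior point `a`,
and choosing `a` with largest first coordinate, its neighbour `a + e₀` contradicts that choice. -/
lemma nonpos_of_lap_eq_zero (hd : 0 < d) (hpos : ∀ p q, Adj d n p q → 0 < γ p q)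
    {T : Set (V d)} (hT : T ⊆ Dset d n) {u : V d → ℝ} (hu : ∀ p ∉ T, u p = 0)
    (hlap : ∀ p ∈ T, lap d n γ u p = 0) (p : V d) : u p ≤ 0 := by
  by_contra! hp
  have mem_T : ∀ q, 0 < u q → q ∈ T := fun q hq => by
    by_contra h
    exact hq.ne' (hu q h)
  have hpbox := Dset_subset_box (hT (mem_T p hp))
  obtain ⟨m, hm, hmax⟩ := (box d n).exists_max_image u ⟨p, hpbox⟩
  set i₀ : Fin d := ⟨0, hd⟩
  obtain ⟨a, haA, hamax⟩ :=
    ((box d n).filter (u · = u m)).exists_max_image (· i₀) ⟨m, Finset.mem_filter.mpr ⟨hm, rfl⟩⟩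
  obtain ⟨-, hua⟩ := Finset.mem_filter.mp haA
  have haT := mem_T a (by linarith [hmax p hpbox])
  have hadj := adj_add_single (hT haT) i₀
  have hnext := eq_of_lap_eq_zero_of_forall_le hpos (hlap a haT)
    (fun q hq => hua ▸ hmax q (Vset_subset_box hq.2.2.1)) hadj
  have := hamax _ (Finset.mem_filter.mpr ⟨Vset_subset_box hadj.2.2.1, hnext.trans hua⟩)
  simp at this

theorem eq_zero_of_lap_eq_zero (hd : 0 < d) (hpos : ∀ p q, Adj d n p q → 0 < γ p q)
    {T : Set (V d)} (hT : T ⊆ Dset d n) {u : V d → ℝ} (hu : ∀ p ∉ T, u p = 0)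
    (hlap : ∀ p ∈ T, lap d n γ u p = 0) (p : V d) : u p = 0 := by
  refine le_antisymm (nonpos_of_lap_eq_zero hd hpos hT hu hlap p) ?_
  have := nonpos_of_lap_eq_zero hd hpos hT (u := -u) (fun q hq => by simp [hu q hq])
    (fun q hq => by rw [lap_neg, hlap q hq, neg_zero]) p
  simpa using this

end MaximumPrinciple

section MixedProblem

variable {d n : ℕ} {γ : V d → V d → ℝ} {t : ℤ}

lemma lap_congr_of_eqOn {u v : V d → ℝ} (h : Set.EqOn u v (Dset d n ∪ JS d n (t - 1))) {q : V d}
    (hq : q ∈ LS d n (t - 1) ∪ JS d n (t - 1)) : lap d n γ u q = lap d n γ v q := by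
  rcases hq with hq | hq
  · refine lap_congr (h (Or.inl hq.1)) fun r hr => h ?_
    rcases mem_LS_or_JS_of_adj hq hr with hr | hr
    exacts [Or.inl hr.1, Or.inr hr]
  · exact lap_congr (h (Or.inr hq))
      fun r hr => h (Or.inl (mem_Dset_of_adj_of_mem_Bset (JS_subset_Bset hq) hr))

theorem mixed_uniqueness_iff (hsymm : ∀ p q, γ p q = γ q p) {B Z : Set (V d)}
    (hB : B ⊆ Bset d n) (hZ : Z ⊆ LS d n t) :
    (∀ u : V d → ℝ,
        (∀ p, p ∉ LS d n t ∪ B → u p = 0) →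
        (∀ p ∈ LS d n (t - 1), lap d n γ u p = 0) →
        (∀ p ∈ JS d n (t - 1), u p = 0) →
        (∀ p ∈ JS d n (t - 1), cur d n γ u p = 0) →
        ∀ p ∈ Z, u p = 0) ↔
      ∀ u : V d → ℝ, (∀ p ∉ LS d n t, u p = 0) →
        (∀ q ∈ LS d n (t - 1) ∪ JS d n (t - 1), lap d n γ u q = 0) → ∀ p ∈ Z, u p = 0 := by
  constructor
  · intro h u hu hlap
    refine h u (fun p hp => hu p fun h => hp (Or.inl h)) (fun p hp => hlap p (Or.inl hp))
      (fun p hp => hu p (notMem_LS_of_mem_Bset (JS_subset_Bset hp))) fun p hp => ?_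
    rw [cur_eq_lap_of_mem_Bset hsymm u (JS_subset_Bset hp)]
    exact hlap p (Or.inr hp)
  · intro h u hu hlap hJ hcur p hp
    have hagree : Set.EqOn ((LS d n t).indicator u) u (Dset d n ∪ JS d n (t - 1)) := by
      rintro r (hr | hr)
      · by_cases hrt : r ∈ LS d n t
        · exact Set.indicator_of_mem hrt u
        · rw [Set.indicator_of_notMem hrt, hu r fun h' => h'.elim hrt
            fun h'' => notMem_Bset_of_mem_Dset hr (hB h'')]
      · rw [Set.indicator_of_notMem (notMem_LS_of_mem_Bset (JS_subset_Bset hr)), hJ r hr]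
    have := h ((LS d n t).indicator u) (fun q hq => Set.indicator_of_notMem hq u)
      (fun q hq => by
        rw [lap_congr_of_eqOn hagree hq]
        rcases hq with hq | hq
        · exact hlap q hq
        · rw [← cur_eq_lap_of_mem_Bset hsymm u (JS_subset_Bset hq)]
          exact hcur q hq) p hp
    rwa [Set.indicator_of_mem (hZ hp)] at this

lemma eq_zero_on_LS_of_eq_zero_on_L (hd : 0 < d) (hpos : ∀ p q, Adj d n p q → 0 < γ p q)
    {u : V d → ℝ} (hu : ∀ p ∉ LS d n t, u p = 0)
    (hlap : ∀ q ∈ LS d n (t - 1), lap d n γ u q = 0) (hL : ∀ p ∈ L d n t, u p = 0) (p : V d) :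
    u p = 0 := by
  refine eq_zero_of_lap_eq_zero hd hpos LS_subset_Dset (fun q hq => ?_) hlap p
  by_cases hqt : q ∈ LS d n t
  · have hlow : ¬sum1 q ≤ t - 1 := fun h => hq ⟨hqt.1, h⟩
    exact hL q ⟨hqt.1, by have := hqt.2; omega⟩
  · exact hu q hqt

end MixedProblem

theorem stmt3_general (d n : ℕ) (hd : 2 ≤ d)
    (γ : V d → V d → ℝ) (hγ : GoodCond d n γ)
    (t : ℤ) :
    ((∀ u : V d → ℝ,
        (∀ p, p ∉ LS d n t ∪ JS d n t → u p = 0) →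
        (∀ p ∈ LS d n (t - 1), lap d n γ u p = 0) →
        (∀ p ∈ JS d n (t - 1), u p = 0) →
        (∀ p ∈ JS d n (t - 1), cur d n γ u p = 0) →
        ∀ p ∈ LS d n t, u p = 0) ↔
      LinearIndependent ℝ
        (fun p : (LS d n t : Set (V d)) =>
          rst (LS d n (t - 1) ∪ JS d n (t - 1)) (vrow d n γ p))) ∧
    ((∀ u : V d → ℝ,
        (∀ p, p ∉ LS d n t ∪ JS d n t → u p = 0) →
        (∀ p ∈ LS d n (t - 1), lap d n γ u p = 0) →
        (∀ p ∈ JS d n (t - 1), u p = 0) →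
        (∀ p ∈ JS d n (t - 1), cur d n γ u p = 0) →
        ∀ p ∈ LS d n t, u p = 0) ↔
      (∀ u : V d → ℝ,
        (∀ p, p ∉ LS d n t ∪ JS d n (t - 1) → u p = 0) →
        (∀ p ∈ LS d n (t - 1), lap d n γ u p = 0) →
        (∀ p ∈ JS d n (t - 1), u p = 0) →
        (∀ p ∈ JS d n (t - 1), cur d n γ u p = 0) →
        ∀ p ∈ L d n t, u p = 0)) := by
  obtain ⟨hsymm, hpos⟩ := hγ
  have hS : LS d n (t - 1) ∪ JS d n (t - 1) ⊆ box d n :=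
    (Set.union_subset_union LS_subset_Dset JS_subset_Bset).trans Vset_subset_box
  rw [mixed_uniqueness_iff hsymm JS_subset_Bset subset_rfl,
    mixed_uniqueness_iff hsymm JS_subset_Bset L_subset_LS]
  refine ⟨(linearIndepOn_rst_vrow_iff hsymm (LS_subset_Dset.trans Dset_subset_box) hS).symm,
    fun h u hu hlap p hp => h u hu hlap p (L_subset_LS hp), fun h u hu hlap p _ => ?_⟩
  exact eq_zero_on_LS_of_eq_zero_on_L (by omega) hpos hu (fun q hq => hlap q (Or.inl hq))
    (h u hu hlap) p

/-- equivalence of (i) uniqueness for the mixed boundary value problem,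
(ii) linear independence of the restricted Laplacian rows, and (iii) injectivity of
the corner potential-to-current map `T₂'^{(t)}`. -/
theorem stmt3 (d n : ℕ) (hd : 2 ≤ d) (hn : 1 ≤ n)
    (γ : V d → V d → ℝ) (hγ : GoodCond d n γ)
    (t : ℤ) (ht1 : (d : ℤ) ≤ t) (ht2 : t ≤ (d : ℤ) * n) :
    ((∀ u : V d → ℝ,
        (∀ p, p ∉ LS d n t ∪ JS d n t → u p = 0) →
        (∀ p ∈ LS d n (t - 1), lap d n γ u p = 0) →
        (∀ p ∈ JS d n (t - 1), u p = 0) →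
        (∀ p ∈ JS d n (t - 1), cur d n γ u p = 0) →
        ∀ p ∈ LS d n t, u p = 0) ↔
      LinearIndependent ℝ
        (fun p : (LS d n t : Set (V d)) =>
          rst (LS d n (t - 1) ∪ JS d n (t - 1)) (vrow d n γ p))) ∧
    ((∀ u : V d → ℝ,
        (∀ p, p ∉ LS d n t ∪ JS d n t → u p = 0) →
        (∀ p ∈ LS d n (t - 1), lap d n γ u p = 0) →
        (∀ p ∈ JS d n (t - 1), u p = 0) →
        (∀ p ∈ JS d n (t - 1), cur d n γ u p = 0) →
        ∀ p ∈ LS d n t, u p = 0) ↔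
      (∀ u : V d → ℝ,
        (∀ p, p ∉ LS d n t ∪ JS d n (t - 1) → u p = 0) →
        (∀ p ∈ LS d n (t - 1), lap d n γ u p = 0) →
        (∀ p ∈ JS d n (t - 1), u p = 0) →
        (∀ p ∈ JS d n (t - 1), cur d n γ u p = 0) →
        ∀ p ∈ L d n t, u p = 0)) :=
  stmt3_general d n hd γ hγ t

end DiscreteCalderon
end
end

section
/- In the d-dimensional lattice graph, fix d ≤ t ≤ dn and a node p ∈ L_t, and let M_p = N(p) ∩ (J_{t−1}^S ∪ L_{t−1}^S). On the reduced subgraph G''^{(t)}_p obtained from the corner subgraph by deleting p and all edges from p into M_p (promoting M_p to boundary), any function u supported on L_t^S \ {p} satisfying Δ_γ u = 0 on L_{t−1}^S \ M_p, u = 0 on J_{t−1}^S, and D_γ u = 0 on J_{t−1}^S must vanish identically. -/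
noncomputable section
open Classical Finset

namespace DiscreteCalderon

/-!
Zero Cauchy data propagate inward. If `x ∈ D` has `x_j = 1`, the boundary node `x - e_j` has `x`
as its only interior neighbour, so the vanishing current there forces `u x = 0`. Otherwise
`y = x - e_j` is interior, and when `y` is not a neighbour of `p₀` its Laplace equation determines
`u x` from the other neighbours of `y`: these lie in lower layers, or at `x - e_j + e_k` in the
layer of `x` with a smaller `j`-th coordinate. Sweeping each layer below `t` along a coordinate `a`
therefore kills `u` there. In the layer `t` the same sweep works where `x_a ≤ p₀_a`, and where
`x_a > p₀_a` a sweep along a second coordinate `b` never meets a neighbour of `p₀`.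
-/

theorem eq_of_sum_mul_sub_eq_zero {α : Type*} {s : Finset α} {w u : α → ℝ} {x : α} {c : ℝ}
    (hx : x ∈ s) (hw : w x ≠ 0) (hsum : ∑ q ∈ s, w q * (u q - c) = 0)
    (hothers : ∀ q ∈ s, q ≠ x → u q = c) : u x = c := by
  rw [Finset.sum_eq_single_of_mem x hx fun q hq hqx => by rw [hothers q hq hqx, sub_self, mul_zero]]
    at hsum
  exact sub_eq_zero.1 ((mul_eq_zero.1 hsum).resolve_left hw)

section ReducedUniqueness

variable {d n : ℕ}

@[simp]
theorem sum1_add (x y : V d) : sum1 (x + y) = sum1 x + sum1 y := Finset.sum_add_distrib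

@[simp]
theorem sum1_sub (x y : V d) : sum1 (x - y) = sum1 x - sum1 y :=
  Finset.sum_sub_distrib _ _

@[simp]
theorem sum1_single (k : Fin d) (c : ℤ) : sum1 (Pi.single k c : V d) = c := by
  simp [sum1]

theorem sum1_nonneg {x : V d} (hx : x ∈ Dset d n) : 0 ≤ sum1 x :=
  Finset.sum_nonneg fun i _ => by linarith [(hx i).1]

theorem dist1_add_single (x : V d) (k : Fin d) (c : ℤ) : dist1 x (x + Pi.single k c) = |c| := by
  simp [dist1, Pi.single_apply, apply_ite (abs : ℤ → ℤ)]

theorem exists_single_of_dist1_eq_one {p q : V d} (h : dist1 p q = 1) :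
    ∃ k, q = p + Pi.single k 1 ∨ q = p - Pi.single k 1 := by
  obtain ⟨k, hk⟩ : ∃ k, p k ≠ q k := by
    by_contra! hpq
    simp [dist1, hpq] at h
  have hsplit := Finset.add_sum_erase univ (fun i => |p i - q i|) (mem_univ k)
  have hrest_nonneg := Finset.sum_nonneg fun i (_ : i ∈ univ.erase k) => abs_nonneg (p i - q i)
  have hk_pos := Int.one_le_abs (sub_ne_zero.2 hk)
  have hrest : ∑ i ∈ univ.erase k, |p i - q i| = 0 := by unfold dist1 at h; omega
  have hoff : ∀ i ≠ k, q i = p i := fun i hi => by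
    have := (Finset.sum_eq_zero_iff_of_nonneg fun i _ => abs_nonneg _).1 hrest i (by simp [hi])
    rw [abs_eq_zero, sub_eq_zero] at this
    exact this.symm
  have hk1 : |p k - q k| = 1 := by unfold dist1 at h; omega
  refine ⟨k, (abs_eq zero_le_one).1 hk1 |>.symm.imp (fun hpk => ?_) (fun hpk => ?_)⟩ <;>
  · ext i
    by_cases hi : i = k
    · subst hi; simp; omega
    · simp [hi, hoff i hi]

theorem mem_box_of_mem_Dset {x : V d} (hx : x ∈ Dset d n) : x ∈ box d n := by
  simp only [box, Fintype.mem_piFinset, Finset.mem_Icc]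
  exact fun i => ⟨by linarith [(hx i).1], by linarith [(hx i).2]⟩

theorem adj_of_dist1_eq_one {x y : V d} (hx : x ∈ Dset d n) (h : dist1 y x = 1) :
    Adj d n y x := by
  refine ⟨h, ?_, Or.inl hx, Or.inr hx⟩
  by_cases hy : y ∈ Dset d n
  · exact Or.inl hy
  · exact Or.inr ⟨hy, x, hx, h⟩

theorem mem_nbr_of_dist1_eq_one {x y : V d} (hx : x ∈ Dset d n) (h : dist1 y x = 1) :
    x ∈ nbr d n y :=
  Finset.mem_filter.2 ⟨mem_box_of_mem_Dset hx, adj_of_dist1_eq_one hx h⟩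

theorem exists_single_of_mem_nbr {y q : V d} (h : q ∈ nbr d n y) :
    ∃ k, q = y + Pi.single k 1 ∨ q = y - Pi.single k 1 :=
  exists_single_of_dist1_eq_one (Finset.mem_filter.1 h).2.1

theorem eq_of_mem_nbrD_sub_single {x q : V d} {j : Fin d} (hxj : x j = 1)
    (hq : q ∈ nbrD d n (x - Pi.single j 1)) : q = x := by
  obtain ⟨hqn, hqD⟩ := Finset.mem_filter.1 hq
  have hqj := (hqD j).1
  obtain ⟨k, rfl | rfl⟩ := exists_single_of_mem_nbr hqn
  · by_cases hk : k = j
    · subst hk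
      exact sub_add_cancel x _
    · simp [Ne.symm hk, hxj] at hqj
  · simp only [Pi.sub_apply, Pi.single_apply, hxj] at hqj
    split_ifs at hqj <;> omega

/-- `u` solves the homogeneous Cauchy problem on the reduced subgraph `G''^{(t)}_{p₀}`; vanishing
off `D` covers both the support condition and the Dirichlet data on `J_{t-1}^S`. -/
structure ReducedCauchyNull (d n : ℕ) (γ : V d → V d → ℝ) (t : ℤ) (p₀ : V d) (u : V d → ℝ) :
    Prop where
  eq_zero_of_not_mem : ∀ q ∉ Dset d n, u q = 0
  lap_eq_zero : ∀ q ∈ LS d n (t - 1) \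
      ({q | Adj d n p₀ q} ∩ (JS d n (t - 1) ∪ LS d n (t - 1))), lap d n γ u q = 0
  cur_eq_zero : ∀ q ∈ JS d n (t - 1), cur d n γ u q = 0

variable {γ : V d → V d → ℝ} {t : ℤ} {p₀ : V d} {u : V d → ℝ}

theorem ReducedCauchyNull.eq_zero_of_apply_eq_one (hu : ReducedCauchyNull d n γ t p₀ u)
    (hγ : GoodCond d n γ) {x : V d} {j : Fin d} (hx : x ∈ Dset d n) (hxt : sum1 x ≤ t)
    (hxj : x j = 1) : u x = 0 := by
  set y := x - Pi.single j 1 with hy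
  have hdist : dist1 y x = 1 := by
    rw [← sub_add_cancel x (Pi.single j 1), dist1_add_single, abs_one]
  have hyD : y ∉ Dset d n := fun h => by
    have := (h j).1
    simp [hy, hxj] at this
  have hyJ : y ∈ JS d n (t - 1) :=
    Or.inl ⟨⟨hyD, x, hx, hdist⟩, by simp [hy]; omega, j, by simp [hy, hxj]⟩
  refine (eq_of_sum_mul_sub_eq_zero (Finset.mem_filter.2 ⟨mem_nbr_of_dist1_eq_one hx hdist, hx⟩)
    (hγ.2 y x (adj_of_dist1_eq_one hx hdist)).ne' (hu.cur_eq_zero y hyJ)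
    fun q hq hqx => absurd (eq_of_mem_nbrD_sub_single hxj hq) hqx).trans ?_
  exact hu.eq_zero_of_not_mem y hyD

theorem ReducedCauchyNull.eq_zero_of_one_lt_apply (hu : ReducedCauchyNull d n γ t p₀ u)
    (hγ : GoodCond d n γ) (hp₀ : sum1 p₀ = t) {x : V d} {j : Fin d} (hx : x ∈ Dset d n)
    (hxt : sum1 x ≤ t) (hxj : 1 < x j) (hp₀x : ∀ i, x - Pi.single j 1 + Pi.single i 1 ≠ p₀)
    (hlow : ∀ q ∈ Dset d n, sum1 q < sum1 x → u q = 0)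
    (hside : ∀ k ≠ j, x - Pi.single j 1 + Pi.single k 1 ∈ Dset d n →
      u (x - Pi.single j 1 + Pi.single k 1) = 0) :
    u x = 0 := by
  set y := x - Pi.single j 1 with hy
  have hyx : y + Pi.single j 1 = x := sub_add_cancel x _
  have hsy : sum1 y = sum1 x - 1 := by simp [hy]
  have hdist : dist1 y x = 1 := by rw [← hyx, dist1_add_single, abs_one]
  have hyD : y ∈ Dset d n := fun i => by
    have := hx i
    by_cases hi : i = j
    · subst hi; simp [hy]; omega
    · simp [hy, hi]; omega
  have huy : u y = 0 := hlow y hyD (by omega)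
  have hnadj : ¬ Adj d n p₀ y := fun h => by
    obtain ⟨i, hi | hi⟩ := exists_single_of_dist1_eq_one h.1
    · rw [hi] at hsy; simp at hsy; omega
    · exact hp₀x i (by rw [hi, sub_add_cancel])
  have hlap := hu.lap_eq_zero y ⟨⟨hyD, by omega⟩, fun h => hnadj h.1⟩
  have hγxy : 0 < γ x y := hγ.1 x y ▸ hγ.2 y x (adj_of_dist1_eq_one hx hdist)
  refine (eq_of_sum_mul_sub_eq_zero (w := fun q => γ q y) (mem_nbr_of_dist1_eq_one hx hdist)
    hγxy.ne' hlap fun q hq hqx => ?_).trans huy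
  rw [huy]
  by_cases hqD : q ∈ Dset d n
  swap
  · exact hu.eq_zero_of_not_mem q hqD
  obtain ⟨k, hk | hk⟩ := exists_single_of_mem_nbr hq
  · have hkj : k ≠ j := by rintro rfl; exact hqx (hk.trans hyx)
    rw [hk] at hqD ⊢
    exact hside k hkj hqD
  · exact hlow q hqD (by rw [hk]; simp [hsy])

theorem ReducedCauchyNull.eq_zero_of_sweep (hu : ReducedCauchyNull d n γ t p₀ u)
    (hγ : GoodCond d n γ) (hp₀ : sum1 p₀ = t) (R : Set (V d)) (j : Fin d)
    (hR : ∀ x ∈ R, x ∈ Dset d n ∧ sum1 x ≤ t ∧ ∀ i, x - Pi.single j 1 + Pi.single i 1 ≠ p₀)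
    (hlow : ∀ x ∈ R, ∀ q ∈ Dset d n, sum1 q < sum1 x → u q = 0)
    (hside : ∀ x ∈ R, ∀ k ≠ j, x - Pi.single j 1 + Pi.single k 1 ∈ Dset d n →
      x - Pi.single j 1 + Pi.single k 1 ∈ R) :
    ∀ x ∈ R, u x = 0 := by
  intro x hx
  induction hm : (x j).toNat using Nat.strong_induction_on generalizing x with
  | _ m ih =>
    obtain ⟨hxD, hxt, hxp₀⟩ := hR x hx
    rcases (hxD j).1.eq_or_lt with hxj | hxj
    · exact hu.eq_zero_of_apply_eq_one hγ hxD hxt hxj.symm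
    refine hu.eq_zero_of_one_lt_apply hγ hp₀ hxD hxt hxj hxp₀ (hlow x hx) fun k hk hkD => ?_
    refine ih _ ?_ _ (hside x hx k hk hkD) rfl
    have := (hkD j).1
    simp [Ne.symm hk] at this ⊢
    omega

theorem ReducedCauchyNull.eq_zero_of_sum1_lt (hu : ReducedCauchyNull d n γ t p₀ u)
    (hγ : GoodCond d n γ) (hp₀ : sum1 p₀ = t) (a : Fin d) :
    ∀ x ∈ Dset d n, sum1 x < t → u x = 0 := by
  intro x hx hxt
  induction hs : (sum1 x).toNat using Nat.strong_induction_on generalizing x with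
  | _ s ih =>
    refine hu.eq_zero_of_sweep hγ hp₀ {z | z ∈ Dset d n ∧ sum1 z = sum1 x} a ?_ ?_ ?_ x ⟨hx, rfl⟩
    · rintro z ⟨hzD, hz⟩
      refine ⟨hzD, by omega, fun i h => ?_⟩
      have := congrArg sum1 h
      simp at this
      omega
    · rintro z ⟨-, hz⟩ q hqD hq
      exact ih _ (by have := sum1_nonneg hqD; omega) q hqD (by omega) rfl
    · rintro z ⟨-, hz⟩ k - hkD
      exact ⟨hkD, by simp [hz]⟩

theorem ReducedCauchyNull.eq_zero_of_mem_L_of_apply_le (hu : ReducedCauchyNull d n γ t p₀ u)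
    (hγ : GoodCond d n γ) (hp₀ : sum1 p₀ = t) (a : Fin d) :
    ∀ x ∈ L d n t, x ≠ p₀ → x a ≤ p₀ a → u x = 0 := by
  intro x hx hxp hxa
  refine hu.eq_zero_of_sweep hγ hp₀ {z | z ∈ L d n t ∧ z ≠ p₀ ∧ z a ≤ p₀ a} a ?_ ?_ ?_ x
    ⟨hx, hxp, hxa⟩
  · rintro z ⟨⟨hzD, hzt⟩, hzp, hza⟩
    refine ⟨hzD, hzt.le, fun i h => ?_⟩
    by_cases hi : i = a
    · subst hi
      exact hzp (by simpa using h)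
    · have := congrFun h a
      simp [Ne.symm hi] at this
      omega
  · rintro z ⟨⟨-, hzt⟩, -⟩ q hqD hq
    exact hu.eq_zero_of_sum1_lt hγ hp₀ a q hqD (by omega)
  · rintro z ⟨⟨-, hzt⟩, -, hza⟩ k hk hkD
    have hka : (z - Pi.single a 1 + Pi.single k 1 : V d) a = z a - 1 := by simp [Ne.symm hk]
    refine ⟨⟨hkD, by simp [hzt]⟩, fun h => ?_, by omega⟩
    rw [h] at hka
    omega

theorem ReducedCauchyNull.eq_zero_of_mem_L_of_lt_apply (hu : ReducedCauchyNull d n γ t p₀ u)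
    (hγ : GoodCond d n γ) (hp₀ : sum1 p₀ = t) {a b : Fin d} (hab : a ≠ b) :
    ∀ x ∈ L d n t, p₀ a < x a → u x = 0 := by
  intro x hx hxa
  have hstep : ∀ (z : V d) k,
      (z - Pi.single b 1 + Pi.single k 1 : V d) a = z a + if a = k then 1 else 0 := by
    intro z k
    simp [Pi.single_apply, hab]
  refine hu.eq_zero_of_sweep hγ hp₀ {z | z ∈ L d n t ∧ p₀ a < z a} b ?_ ?_ ?_ x ⟨hx, hxa⟩
  · rintro z ⟨⟨hzD, hzt⟩, hza⟩
    refine ⟨hzD, hzt.le, fun i h => ?_⟩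
    have := hstep z i
    rw [h] at this
    split_ifs at this <;> omega
  · rintro z ⟨⟨-, hzt⟩, -⟩ q hqD hq
    exact hu.eq_zero_of_sum1_lt hγ hp₀ a q hqD (by omega)
  · rintro z ⟨⟨-, hzt⟩, hza⟩ k - hkD
    refine ⟨⟨hkD, by simp [hzt]⟩, ?_⟩
    have := hstep z k
    split_ifs at this <;> omega

end ReducedUniqueness

theorem stmt8_general (d n : ℕ) (hd : 2 ≤ d)
    (γ : V d → V d → ℝ) (hγ : GoodCond d n γ)
    (t : ℤ)
    (p₀ : V d) (hp₀ : p₀ ∈ L d n t)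
    (u : V d → ℝ)
    (hsupp : ∀ q, q ∉ LS d n t \ {p₀} → u q = 0)
    (hharm : ∀ q ∈ LS d n (t - 1) \
        ({q | Adj d n p₀ q} ∩ (JS d n (t - 1) ∪ LS d n (t - 1))),
      lap d n γ u q = 0)
    (hneu : ∀ q ∈ JS d n (t - 1), cur d n γ u q = 0) :
    ∀ q, u q = 0 := by
  have hu : ReducedCauchyNull d n γ t p₀ u :=
    ⟨fun q hq => hsupp q fun h => hq h.1.1, hharm, hneu⟩
  let a : Fin d := ⟨0, by omega⟩
  have hab : a ≠ ⟨1, hd⟩ := by simp [a]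
  intro x
  by_cases hx : x ∈ LS d n t \ {p₀}
  · obtain ⟨⟨hxD, hxt⟩, hxp₀⟩ := hx
    rcases hxt.lt_or_eq with hlt | heq
    · exact hu.eq_zero_of_sum1_lt hγ hp₀.2 a x hxD hlt
    rcases le_or_gt (x a) (p₀ a) with hle | hlt
    · exact hu.eq_zero_of_mem_L_of_apply_le hγ hp₀.2 a x ⟨hxD, heq⟩ hxp₀ hle
    · exact hu.eq_zero_of_mem_L_of_lt_apply hγ hp₀.2 hab x ⟨hxD, heq⟩ hlt
  · exact hsupp x hx

/-- uniqueness on the reduced subgraph obtained by deleting a node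
`p₀ ∈ L_t` and its edges into `M_{p₀} = N(p₀) ∩ (J_{t-1}^S ∪ L_{t-1}^S)`. -/
theorem stmt8 (d n : ℕ) (hd : 2 ≤ d) (hn : 1 ≤ n)
    (γ : V d → V d → ℝ) (hγ : GoodCond d n γ)
    (t : ℤ) (ht1 : (d : ℤ) ≤ t) (ht2 : t ≤ (d : ℤ) * n)
    (p₀ : V d) (hp₀ : p₀ ∈ L d n t)
    (u : V d → ℝ)
    (hsupp : ∀ q, q ∉ LS d n t \ {p₀} → u q = 0)
    (hharm : ∀ q ∈ LS d n (t - 1) \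
        ({q | Adj d n p₀ q} ∩ (JS d n (t - 1) ∪ LS d n (t - 1))),
      lap d n γ u q = 0)
    (hdir : ∀ q ∈ JS d n (t - 1), u q = 0)
    (hneu : ∀ q ∈ JS d n (t - 1), cur d n γ u q = 0) :
    ∀ q, u q = 0 :=
  stmt8_general d n hd γ hγ t p₀ hp₀ u hsupp hharm hneu

end DiscreteCalderon
end
end
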